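/- With notation as in the second-moment lemma, the total lifted leakage satisfies L_{k'} ≤ 2^{2^k + k}/√(2^{k'} − 2^k). In particular, L_{k'} → 0 as k' → ∞. -/

import Mathlib

open Finset
open scoped Classical

noncomputable section

/-- Boolean functions `𝔽₂^k → {1,−1}`, encoded with `true ↦ −1` and `false ↦ 1`. -/
abbrev BF (k : ℕ) := (Fin k → ZMod 2) → Bool

/-- The real `±1`-valued function corresponding to a Boolean function. -/
def toReal {k : ℕ} (f : BF k) : (Fin k → ZMod 2) → ℝ := fun x => if f x then -1 else 1

/-- The character `χ_α(x) = (−1)^⟨α,x⟩` on `𝔽₂^k`. -/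
def chi {k : ℕ} (α x : Fin k → ZMod 2) : ℝ :=
  (-1 : ℝ) ^ (dotProduct α x).val

/-- The Fourier coefficient `f̂_α = 2^{−k} Σ_x χ_α(x) f(x)`. -/
def fhat {k : ℕ} (f : (Fin k → ZMod 2) → ℝ) (α : Fin k → ZMod 2) : ℝ :=
  (2 ^ k : ℝ)⁻¹ * ∑ x, chi α x * f x

/-- The supporting affine subspace `affine(f)` of a Boolean function `f`: the affine span of
its Fourier support, as a subset of `𝔽₂^k`. -/
def affSupp {k : ℕ} (f : BF k) : Set (Fin k → ZMod 2) :=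
  (affineSpan (ZMod 2) {α | fhat (toReal f) α ≠ 0} : Set (Fin k → ZMod 2))

/-- `dim(f)`: the dimension of the supporting affine subspace of `f`. -/
def dimB {k : ℕ} (f : BF k) : ℕ :=
  Module.finrank (ZMod 2) (affineSpan (ZMod 2) {α | fhat (toReal f) α ≠ 0}).direction

/-- Outflow of a flow `w` at node `f` for source/sink placement `g`. -/
def outflow {k : ℕ} (w : BF k → BF k → BF k → ℝ) (f g : BF k) : ℝ := ∑ f₂, w f f₂ g

/-- Inflow of a flow `w` at node `f` for source/sink placement `g`. -/
def inflow {k : ℕ} (w : BF k → BF k → BF k → ℝ) (f g : BF k) : ℝ := ∑ f₂, w f₂ f g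

/-- The signed leak `leak_w(f,g) = inflow_w(f,g) − outflow_w(f,g)`. -/
def leak {k : ℕ} (w : BF k → BF k → BF k → ℝ) (f g : BF k) : ℝ :=
  inflow w f g - outflow w f g

/-- `g'` agrees with `g` on the supporting affine subspace of `f`. -/
def agrees {k : ℕ} (f g g' : BF k) : Prop := ∀ x ∈ affSupp f, g' x = g x

/-- `w` is an infinity relaxed flow of the gadget `G`: it is nonnegative, satisfies the
capacity constraints, and for every `f` with `dim(f) ≥ 1` and every placement `g`, total
outflow equals total inflow when summed over all placements agreeing with `g` on
`affine(f)`. -/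
def InfinityRelaxedFlow {k : ℕ} (G : BF k → BF k → ℝ) (w : BF k → BF k → BF k → ℝ) : Prop :=
  (∀ f₁ f₂ g, 0 ≤ w f₁ f₂ g) ∧
  (∀ f₁ f₂ g, w f₁ f₂ g + w f₂ f₁ g ≤ G f₁ f₂) ∧
  ∀ g f, 1 ≤ dimB f →
    (∑ g' ∈ univ.filter (agrees f g), outflow w f g')
      = ∑ g' ∈ univ.filter (agrees f g), inflow w f g'

/-- Parameters `(A, b, β, c)` of an affine lift `M_{A,b,β,c} ∈ M_{k→k'}`, `A` of full rank. -/
def MParam (k k' : ℕ) :=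
  {p : Matrix (Fin k) (Fin k') (ZMod 2) × (Fin k → ZMod 2) × (Fin k' → ZMod 2) × ZMod 2 //
    p.1.rank = k}

/-- The affine lift `M(f)(y) = f(Ay+b)(−1)^c χ_β(y)` acting on Boolean functions:
the value at `y` is flipped exactly when `c + ⟨β,y⟩ = 1`. -/
def applyB {k k' : ℕ} (p : MParam k k') (f : BF k) : BF k' :=
  fun y => xor (f (p.1.1.mulVec y + p.1.2.1))
    (decide (p.1.2.2.2 + dotProduct p.1.2.2.1 y = 1))

/-- The dual map `M^# = M_{Aᵀ,β,b,c} : F_{k'} → F_k`, sending a placement `g'` to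
`α ↦ g'(Aᵀα+β)(−1)^c χ_b(α)`. -/
def sharpB {k k' : ℕ} (p : MParam k k') (g' : BF k') : BF k :=
  fun α => xor (g' (Matrix.vecMul α p.1.1 + p.1.2.2.1))
    (decide (p.1.2.2.2 + dotProduct p.1.2.1 α = 1))


/-- The leak of the full lift `w' = lift_{k→k'}(w)` at node `f'` and placement `g'`:
`leak_{w'}(f',g') = |M_{k→k'}|⁻¹ Σ_{M ∈ M_{k→k'}} Σ_{f : M(f)=f'} leak_w(f, M^#(g'))`. -/
def leakLift (k k' : ℕ) (w : BF k → BF k → BF k → ℝ) (f' g' : BF k') : ℝ :=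
  (Nat.card (MParam k k') : ℝ)⁻¹ *
    ∑ᶠ p : MParam k k',
      ∑ f ∈ univ.filter (fun f : BF k => applyB p f = f'), leak w f (sharpB p g')

/-- The total lifted leakage
`L_{k'} = E_{g' ∈ F_{k'}} Σ_{f' : dim(f') > 0} |leak_{w'}(f',g')|`. -/
def Ltot (k k' : ℕ) (w : BF k → BF k → BF k → ℝ) : ℝ :=
  (Fintype.card (BF k') : ℝ)⁻¹ *
    ∑ g' : BF k', ∑ f' ∈ univ.filter (fun f' : BF k' => 0 < dimB f'),
      |leakLift k k' w f' g'|

/-!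
Write `X_{f,f'}(g') = Σ_{M ∈ N_{f→f'}} leak_w(f, M^#(g'))`. Expanding `X²` pairs two lifts
`M₁, M₂`. Unless the dual maps of `M₁` and `M₂` meet outside `affine(f)`, the correlation
`Σ_{g'} leak_w(f, M₁^# g') leak_w(f, M₂^# g')` vanishes: the second factor ignores the values of
`g'` on `M₁^#(affine(f)ᶜ)`, and summing the first over those values runs over a class of
placements agreeing on `affine(f)`, on which conservation makes the leak sum to zero.
Transvections of `𝔽₂^{k'}` fixing `affine(f')` pointwise show that over `N_{f→f'}` the dual image of
a fixed point is equidistributed outside `affine(f')`, so at most a `4^k / (2^{k'} - 2^k)` fraction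
of the pairs meet. With `|leak_w(f, ·)| ≤ cap(f) = Σ_{f₂} G(f, f₂)` this gives
`E X² ≤ 4^k |N_{f→f'}|² cap(f)² / (2^{k'} - 2^k)`; Cauchy–Schwarz turns it into a bound on `E |X|`,
and summing with `Σ_{f'} |N_{f→f'}| = |M_{k→k'}|` and `Σ_f cap(f) = 2` gives
`L_{k'} ≤ 2^{k+1} / √(2^{k'} - 2^k)`.
-/

open Matrix

section Fourier

variable {n : ℕ}

def sign2 (a : ZMod 2) : ℝ := (-1) ^ a.val

lemma sign2_add (a b : ZMod 2) : sign2 (a + b) = sign2 a * sign2 b := by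
  rw [sign2, ZMod.val_add, ← neg_one_pow_eq_pow_mod_two, pow_add, sign2, sign2]

lemma sign2_ne_zero (a : ZMod 2) : sign2 a ≠ 0 := pow_ne_zero _ (by norm_num)

@[simp] lemma sign2_zero : sign2 0 = 1 := pow_zero _

@[simp] lemma sign2_one : sign2 1 = -1 := pow_one _

lemma zmod_two_eq_zero_or_one (a : ZMod 2) : a = 0 ∨ a = 1 := by
  fin_cases a
  exacts [Or.inl rfl, Or.inr rfl]

lemma chi_eq_sign2 (α x : Fin n → ZMod 2) : chi α x = sign2 (α ⬝ᵥ x) := rfl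

lemma sum_chi_of_ne_zero {z : Fin n → ZMod 2} (hz : z ≠ 0) : ∑ α, chi α z = 0 := by
  obtain ⟨i, hi⟩ := Function.ne_iff.1 hz
  have hzi : z i = 1 := (zmod_two_eq_zero_or_one _).resolve_left hi
  have hflip : ∀ α, chi (α + Pi.single i 1) z = -chi α z := fun α => by
    rw [chi_eq_sign2, add_dotProduct, sign2_add, single_dotProduct, one_mul, hzi, sign2_one,
      chi_eq_sign2, mul_neg_one]
  have hshift := Fintype.sum_equiv (Equiv.addRight (Pi.single i 1)) _ (fun α => chi α z)
    fun _ => rfl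
  simp only [Equiv.coe_addRight, hflip, sum_neg_distrib] at hshift
  linarith

lemma sum_chi (z : Fin n → ZMod 2) : ∑ α, chi α z = if z = 0 then 2 ^ n else 0 := by
  split_ifs with hz
  · simp [hz, chi]
  · exact sum_chi_of_ne_zero hz

theorem fhat_inversion (F : (Fin n → ZMod 2) → ℝ) (x : Fin n → ZMod 2) :
    ∑ α, fhat F α * chi α x = F x := by
  have hchi : ∀ α y, chi α y * chi α x = chi α (y + x) := fun α y => by
    simp only [chi_eq_sign2, dotProduct_add, sign2_add]
  calc ∑ α, fhat F α * chi α x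
      = (2 ^ n : ℝ)⁻¹ * ∑ y, F y * ∑ α, chi α (y + x) := by
        simp only [fhat, ← hchi, mul_sum, sum_mul]
        rw [sum_comm]
        exact sum_congr rfl fun _ _ => sum_congr rfl fun _ _ => by ring
    _ = F x := by
        simp only [sum_chi, add_eq_zero_iff_eq_neg, ZModModule.neg_eq_self, mul_ite, mul_zero,
          sum_ite_eq', mem_univ, if_true]
        field_simp

end Fourier

section Spectrum

variable {n : ℕ}

lemma toReal_injective : Function.Injective (toReal (k := n)) := fun f g h => funext fun x => by
  have hx := congrFun h x
  revert hx
  unfold toReal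
  cases f x <;> cases g x <;> norm_num

lemma eq_of_fhat_eq {f g : BF n} (h : fhat (toReal f) = fhat (toReal g)) : f = g :=
  toReal_injective <| funext fun x => by rw [← fhat_inversion (toReal f), h, fhat_inversion]

lemma exists_fhat_ne_zero (f : BF n) : ∃ α, fhat (toReal f) α ≠ 0 := by
  by_contra! h
  have h0 := fhat_inversion (toReal f) 0
  simp only [h, zero_mul, sum_const_zero, toReal] at h0
  split_ifs at h0 <;> norm_num at h0

end Spectrum

instance (k k' : ℕ) : Fintype (MParam k k') := by
  unfold MParam
  infer_instance

namespace MParam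

variable {k k' : ℕ}

/-- `α ↦ Aᵀα + β`, the map along which `M^#` reads placements. -/
def dualMap (p : MParam k k') : (Fin k → ZMod 2) →ᵃ[ZMod 2] (Fin k' → ZMod 2) :=
  (vecMulLinear p.1.1).toAffineMap + AffineMap.const (ZMod 2) _ p.1.2.2.1

lemma dualMap_apply (p : MParam k k') (α : Fin k → ZMod 2) :
    p.dualMap α = α ᵥ* p.1.1 + p.1.2.2.1 := rfl

lemma dualMap_injective (p : MParam k k') : Function.Injective p.dualMap := by
  have hrows : LinearIndependent (ZMod 2) p.1.1.row := by
    rw [linearIndependent_iff_card_eq_finrank_span, Fintype.card_fin, Set.finrank,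
      ← rank_eq_finrank_span_row]
    exact p.2.symm
  intro α α' h
  exact vecMul_injective_iff.2 hrows (add_right_cancel h)

lemma ext_of_dualMap {p q : MParam k k'} (h : ∀ α, p.dualMap α = q.dualMap α)
    (hb : p.1.2.1 = q.1.2.1) (hc : p.1.2.2.2 = q.1.2.2.2) : p = q := by
  have hβ : p.1.2.2.1 = q.1.2.2.1 := by simpa [dualMap_apply] using h 0
  have hA : p.1.1 = q.1.1 := vecMul_injective <| funext fun α => by
    simpa [dualMap_apply, hβ] using h α
  exact Subtype.ext (Prod.ext hA (Prod.ext hb (Prod.ext hβ hc)))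

def mapAffine (T : (Fin k' → ZMod 2) ≃ᵃ[ZMod 2] (Fin k' → ZMod 2)) (p : MParam k k') :
    MParam k k' :=
  ⟨(p.1.1 * (LinearMap.toMatrix' T.linear.toLinearMap)ᵀ, p.1.2.1, T p.1.2.2.1, p.1.2.2.2), by
    rw [rank_mul_eq_left_of_isUnit_det _ _ (by
      rw [det_transpose, LinearMap.det_toMatrix']
      exact T.linear.isUnit_det')]
    exact p.2⟩

lemma dualMap_mapAffine (T : (Fin k' → ZMod 2) ≃ᵃ[ZMod 2] (Fin k' → ZMod 2))
    (p : MParam k k') (α : Fin k → ZMod 2) : (p.mapAffine T).dualMap α = T (p.dualMap α) := by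
  change α ᵥ* (p.1.1 * (LinearMap.toMatrix' T.linear.toLinearMap)ᵀ) + T p.1.2.2.1
    = T (α ᵥ* p.1.1 + p.1.2.2.1)
  rw [← vecMul_vecMul, vecMul_transpose, LinearMap.toMatrix'_mulVec]
  exact (T.map_vadd _ _).symm

lemma mapAffine_mapAffine {T T' : (Fin k' → ZMod 2) ≃ᵃ[ZMod 2] (Fin k' → ZMod 2)}
    (h : Function.LeftInverse T' T) (p : MParam k k') : (p.mapAffine T).mapAffine T' = p :=
  ext_of_dualMap (fun α => by rw [dualMap_mapAffine, dualMap_mapAffine, h]) rfl rfl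

end MParam

section Lift

variable {k k' : ℕ}

lemma sharpB_apply (p : MParam k k') (g' : BF k') (α : Fin k → ZMod 2) :
    sharpB p g' α = xor (g' (p.dualMap α)) (decide (p.1.2.2.2 + p.1.2.1 ⬝ᵥ α = 1)) := rfl

lemma toReal_applyB (p : MParam k k') (f : BF k) (y : Fin k' → ZMod 2) :
    toReal (applyB p f) y
      = toReal f (p.1.1 *ᵥ y + p.1.2.1) * sign2 (p.1.2.2.2 + p.1.2.2.1 ⬝ᵥ y) := by
  unfold toReal applyB
  generalize f _ = a
  generalize p.1.2.2.2 + _ = c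
  rcases zmod_two_eq_zero_or_one c with rfl | rfl <;> cases a <;> simp

theorem fhat_applyB (p : MParam k k') (f : BF k) (γ : Fin k' → ZMod 2) :
    fhat (toReal (applyB p f)) γ = ∑ α, if p.dualMap α = γ
      then fhat (toReal f) α * sign2 (α ⬝ᵥ p.1.2.1 + p.1.2.2.2) else 0 := by
  have hterm : ∀ y α, chi γ y * (fhat (toReal f) α * chi α (p.1.1 *ᵥ y + p.1.2.1)
      * sign2 (p.1.2.2.2 + p.1.2.2.1 ⬝ᵥ y)) = fhat (toReal f) α
        * sign2 (α ⬝ᵥ p.1.2.1 + p.1.2.2.2) * chi y (γ + p.dualMap α) := fun y α => by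
    simp only [chi_eq_sign2, MParam.dualMap_apply, dotProduct_add, add_dotProduct,
      dotProduct_mulVec, sign2_add, dotProduct_comm y]
    ring
  have hinv y := (fhat_inversion (toReal f) (p.1.1 *ᵥ y + p.1.2.1)).symm
  rw [fhat]
  simp only [toReal_applyB, hinv, sum_mul, mul_sum, hterm]
  rw [sum_comm]
  refine sum_congr rfl fun α _ => ?_
  simp only [← mul_sum, sum_chi, add_eq_zero_iff_eq_neg, ZModModule.neg_eq_self]
  by_cases h : p.dualMap α = γ
  · simp only [h, if_true]
    field_simp
  · simp [h, Ne.symm h]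

lemma fhat_applyB_dualMap (p : MParam k k') (f : BF k) (α : Fin k → ZMod 2) :
    fhat (toReal (applyB p f)) (p.dualMap α)
      = fhat (toReal f) α * sign2 (α ⬝ᵥ p.1.2.1 + p.1.2.2.2) := by
  rw [fhat_applyB, sum_eq_single α (fun β _ hβ => if_neg (p.dualMap_injective.ne hβ))
    (by simp), if_pos rfl]

lemma fourierSupport_applyB (p : MParam k k') (f : BF k) :
    {γ | fhat (toReal (applyB p f)) γ ≠ 0} = p.dualMap '' {α | fhat (toReal f) α ≠ 0} := by
  ext γ
  constructor
  · intro hγ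
    by_contra hnot
    refine hγ ((fhat_applyB p f γ).trans (sum_eq_zero fun α _ => ?_))
    split_ifs with h
    · rw [not_ne_iff.1 fun hα => hnot ⟨α, hα, h⟩, zero_mul]
    · rfl
  · rintro ⟨α, hα, rfl⟩
    change fhat _ _ ≠ 0
    rw [fhat_applyB_dualMap]
    exact mul_ne_zero hα (sign2_ne_zero _)

lemma affineSpan_applyB (p : MParam k k') (f : BF k) :
    affineSpan (ZMod 2) {γ | fhat (toReal (applyB p f)) γ ≠ 0}
      = (affineSpan (ZMod 2) {α | fhat (toReal f) α ≠ 0}).map p.dualMap := by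
  rw [AffineSubspace.map_span, fourierSupport_applyB]

lemma affSupp_applyB (p : MParam k k') (f : BF k) :
    affSupp (applyB p f) = p.dualMap '' affSupp f := by
  rw [affSupp, affineSpan_applyB, AffineSubspace.coe_map, affSupp]

lemma dualMap_mem_affSupp_applyB_iff {p : MParam k k'} {f : BF k} {α : Fin k → ZMod 2} :
    p.dualMap α ∈ affSupp (applyB p f) ↔ α ∈ affSupp f := by
  rw [affSupp_applyB]
  exact p.dualMap_injective.mem_set_image

lemma dimB_applyB_le (p : MParam k k') (f : BF k) : dimB (applyB p f) ≤ dimB f := by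
  rw [dimB, affineSpan_applyB, AffineSubspace.map_direction]
  exact Submodule.finrank_map_le _ _

lemma applyB_congr {p q : MParam k k'} {f : BF k}
    (h : ∀ α, fhat (toReal f) α ≠ 0 → p.dualMap α = q.dualMap α)
    (hb : p.1.2.1 = q.1.2.1) (hc : p.1.2.2.2 = q.1.2.2.2) : applyB p f = applyB q f := by
  refine eq_of_fhat_eq <| funext fun γ => ?_
  simp only [fhat_applyB, hb, hc]
  refine sum_congr rfl fun α _ => ?_
  by_cases hα : fhat (toReal f) α = 0
  · simp [hα]
  · rw [h α hα]

lemma applyB_mapAffine {T : (Fin k' → ZMod 2) ≃ᵃ[ZMod 2] (Fin k' → ZMod 2)} {p : MParam k k'}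
    {f : BF k} (hT : ∀ z ∈ affSupp (applyB p f), T z = z) :
    applyB (p.mapAffine T) f = applyB p f :=
  applyB_congr (fun α hα => by
    rw [MParam.dualMap_mapAffine,
      hT _ (dualMap_mem_affSupp_applyB_iff.2 (subset_affineSpan _ _ hα))])
    rfl rfl

end Lift

/-- In characteristic two the segment from `y` to `y'` is just `{y, y'}`, so a transvection with
direction `y + y'` moves `y` to `y'` without moving the affine subspace `V` it avoids. -/
theorem AffineSubspace.exists_affineEquiv_eq_of_notMem {E : Type*} [AddCommGroup E]
    [Module (ZMod 2) E] {V : AffineSubspace (ZMod 2) E} {z₀ : E} (hz₀ : z₀ ∈ V) {y y' : E}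
    (hy : y ∉ V) (hy' : y' ∉ V) : ∃ T : E ≃ᵃ[ZMod 2] E, (∀ z ∈ V, T z = z) ∧ T y = y' := by
  have hx : y + z₀ ∉ V.direction ⊔ Submodule.span (ZMod 2) {y + y'} := by
    intro hmem
    obtain ⟨u, hu, v, hv, huv⟩ := Submodule.mem_sup.1 hmem
    obtain ⟨c, rfl⟩ := Submodule.mem_span_singleton.1 hv
    have hV : u + z₀ ∈ V := AffineSubspace.vadd_mem_of_mem_direction hu hz₀
    rw [eq_sub_of_add_eq huv, ZModModule.sub_eq_add] at hV
    rcases zmod_two_eq_zero_or_one c with rfl | rfl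
    · refine hy ?_
      rwa [zero_smul, add_zero, add_assoc, ZModModule.add_self, add_zero] at hV
    · refine hy' ?_
      rwa [one_smul, show y + z₀ + (y + y') + z₀ = y' + (y + y) + (z₀ + z₀) by abel,
        ZModModule.add_self, ZModModule.add_self, add_zero, add_zero] at hV
  obtain ⟨ξ, hξx, hξ⟩ := Submodule.exists_dual_map_eq_bot_of_notMem hx inferInstance
  have hξ0 : ∀ v ∈ V.direction ⊔ Submodule.span (ZMod 2) {y + y'}, ξ v = 0 := fun v hv =>
    (Submodule.mem_bot _).1 (hξ ▸ Submodule.mem_map_of_mem hv)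
  have hξs : ξ (y + y') = 0 :=
    hξ0 _ (Submodule.mem_sup_right (Submodule.mem_span_singleton_self _))
  have hξV : ∀ z ∈ V, ξ z + ξ z₀ = 0 := fun z hz => by
    rw [← map_add, ← ZModModule.sub_eq_add]
    exact hξ0 _ (Submodule.mem_sup_left (AffineSubspace.vsub_mem_direction hz hz₀))
  refine ⟨(LinearEquiv.transvection hξs).toAffineEquiv.trans
    (AffineEquiv.constVAdd (ZMod 2) E (ξ z₀ • (y + y'))), fun z hz => ?_, ?_⟩
  all_goals simp only [AffineEquiv.coe_trans, Function.comp_apply, LinearEquiv.coe_toAffineEquiv,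
    LinearEquiv.transvection.apply, AffineEquiv.constVAdd_apply, vadd_eq_add]
  all_goals rw [add_left_comm, ← add_smul, add_comm (ξ z₀)]
  · rw [hξV z hz, zero_smul, add_zero]
  · rw [← map_add, (zmod_two_eq_zero_or_one _).resolve_left hξx, one_smul, ← add_assoc,
      ZModModule.add_self, zero_add]

section Counting

variable {k k' : ℕ}

/-- The set `N_{f→f'}` of the paper. -/
def liftsTo (f : BF k) (f' : BF k') : Finset (MParam k k') := univ.filter fun p => applyB p f = f'

lemma mem_liftsTo {f : BF k} {f' : BF k'} {p : MParam k k'} :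
    p ∈ liftsTo f f' ↔ applyB p f = f' := by
  simp [liftsTo]

def liftLeak (w : BF k → BF k → BF k → ℝ) (f : BF k) (f' g' : BF k') : ℝ :=
  ∑ p ∈ liftsTo f f', leak w f (sharpB p g')

lemma sum_card_liftsTo (f : BF k) : ∑ f' : BF k', #(liftsTo f f') = Fintype.card (MParam k k') :=
  (card_eq_sum_card_fiberwise fun _ _ => mem_univ _).symm

lemma card_liftsTo_dualMap_eq (f : BF k) (f' : BF k') (β : Fin k → ZMod 2)
    {y y' : Fin k' → ZMod 2} (hy : y ∉ affSupp f') (hy' : y' ∉ affSupp f') :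
    #{p ∈ liftsTo f f' | p.dualMap β = y} = #{p ∈ liftsTo f f' | p.dualMap β = y'} := by
  obtain ⟨γ₀, hγ₀⟩ := exists_fhat_ne_zero f'
  obtain ⟨T, hTV, hTy⟩ :=
    AffineSubspace.exists_affineEquiv_eq_of_notMem (subset_affineSpan _ _ hγ₀) hy hy'
  have hTV' : ∀ z ∈ affSupp f', T.symm z = z := fun z hz => T.symm_apply_eq.2 (hTV z hz).symm
  refine card_nbij' (MParam.mapAffine T) (MParam.mapAffine T.symm) ?_ ?_
    (fun p _ => MParam.mapAffine_mapAffine T.symm_apply_apply p)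
    (fun p _ => MParam.mapAffine_mapAffine T.apply_symm_apply p)
  · intro p hp
    simp only [mem_coe, mem_filter, mem_liftsTo] at hp ⊢
    refine ⟨?_, by rw [MParam.dualMap_mapAffine, hp.2, hTy]⟩
    rw [applyB_mapAffine (hp.1 ▸ hTV), hp.1]
  · intro p hp
    simp only [mem_coe, mem_filter, mem_liftsTo] at hp ⊢
    refine ⟨?_, by rw [MParam.dualMap_mapAffine, hp.2, T.symm_apply_eq, hTy]⟩
    rw [applyB_mapAffine (hp.1 ▸ hTV'), hp.1]

lemma card_affSupp_le {f : BF k} {f' : BF k'} (h : (liftsTo f f').Nonempty) :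
    #{z | z ∈ affSupp f'} ≤ 2 ^ k := by
  obtain ⟨p, hp⟩ := h
  calc #{z | z ∈ affSupp f'} ≤ #(univ.image p.dualMap) := card_le_card fun z hz => by
        rw [← mem_liftsTo.1 hp, affSupp_applyB] at hz
        obtain ⟨α, -, rfl⟩ := (mem_filter.1 hz).2
        exact mem_image_of_mem _ (mem_univ α)
    _ ≤ 2 ^ k := card_image_le.trans (by simp)

lemma card_liftsTo_dualMap_mul_le (f : BF k) (f' : BF k') (β : Fin k → ZMod 2)
    {y : Fin k' → ZMod 2} (hy : y ∉ affSupp f') :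
    #{p ∈ liftsTo f f' | p.dualMap β = y} * (2 ^ k' - 2 ^ k) ≤ #(liftsTo f f') := by
  rcases (liftsTo f f').eq_empty_or_nonempty with hN | hN
  · simp [hN]
  have hC : 2 ^ k' - 2 ^ k ≤ #{z | z ∉ affSupp f'} := by
    have hsplit := card_filter_add_card_filter_not (s := univ) (· ∈ affSupp f')
    rw [card_univ, Fintype.card_fun, ZMod.card, Fintype.card_fin] at hsplit
    have := card_affSupp_le hN
    omega
  calc #{p ∈ liftsTo f f' | p.dualMap β = y} * (2 ^ k' - 2 ^ k)
      ≤ ∑ y' with y' ∉ affSupp f', #{p ∈ liftsTo f f' | p.dualMap β = y'} := by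
        rw [sum_congr rfl fun y' hy' =>
          card_liftsTo_dualMap_eq f f' β (mem_filter.1 hy').2 hy, sum_const, smul_eq_mul,
          mul_comm]
        exact Nat.mul_le_mul_right _ hC
    _ ≤ #(liftsTo f f') := by
        rw [sum_card_fiberwise_eq_card_filter]
        exact card_filter_le _ _

end Counting

section Collisions

variable {k k' : ℕ}

def Collide (f : BF k) (p q : MParam k k') : Prop :=
  ∃ α ∉ affSupp f, ∃ β, p.dualMap α = q.dualMap β

lemma card_liftsTo_pair_dualMap_mul_le (f : BF k) (f' : BF k') {α : Fin k → ZMod 2}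
    (hα : α ∉ affSupp f) (β : Fin k → ZMod 2) :
    #{pq ∈ liftsTo f f' ×ˢ liftsTo f f' | pq.1.dualMap α = pq.2.dualMap β} * (2 ^ k' - 2 ^ k)
      ≤ #(liftsTo f f') * #(liftsTo f f') := by
  rw [card_filter, sum_product, sum_mul, ← smul_eq_mul, ← sum_const]
  refine sum_le_sum fun p hp => ?_
  have hy : p.dualMap α ∉ affSupp f' := by
    rwa [← mem_liftsTo.1 hp, dualMap_mem_affSupp_applyB_iff]
  simpa only [← card_filter, eq_comm (a := p.dualMap α)]
    using card_liftsTo_dualMap_mul_le f f' β hy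

lemma card_collide_mul_le (f : BF k) (f' : BF k') :
    #{pq ∈ liftsTo f f' ×ˢ liftsTo f f' | Collide f pq.1 pq.2} * (2 ^ k' - 2 ^ k)
      ≤ 2 ^ k * 2 ^ k * (#(liftsTo f f') * #(liftsTo f f')) := by
  set N := liftsTo f f'
  set S := (univ.filter fun α => α ∉ affSupp f) ×ˢ (univ : Finset (Fin k → ZMod 2)) with hSdef
  have hcover : {pq ∈ N ×ˢ N | Collide f pq.1 pq.2}
      ⊆ S.biUnion fun αβ => {pq ∈ N ×ˢ N | pq.1.dualMap αβ.1 = pq.2.dualMap αβ.2} := by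
    intro pq hpq
    obtain ⟨hmem, α, hα, β, hαβ⟩ := mem_filter.1 hpq
    exact mem_biUnion.2 ⟨(α, β), by simp [hSdef, hα], mem_filter.2 ⟨hmem, hαβ⟩⟩
  have hS : #S ≤ 2 ^ k * 2 ^ k := by
    rw [hSdef, card_product]
    gcongr
    · exact (card_filter_le _ _).trans (by simp)
    · simp
  calc #{pq ∈ N ×ˢ N | Collide f pq.1 pq.2} * (2 ^ k' - 2 ^ k)
      ≤ ∑ αβ ∈ S, #{pq ∈ N ×ˢ N | pq.1.dualMap αβ.1 = pq.2.dualMap αβ.2} * (2 ^ k' - 2 ^ k) := by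
        rw [← sum_mul]
        exact Nat.mul_le_mul_right _ ((card_le_card hcover).trans card_biUnion_le)
    _ ≤ ∑ _αβ ∈ S, #N * #N := sum_le_sum fun αβ hαβ =>
        card_liftsTo_pair_dualMap_mul_le f f' (mem_filter.1 (mem_product.1 hαβ).1).2 αβ.2
    _ ≤ 2 ^ k * 2 ^ k * (#N * #N) := by
        rw [sum_const, smul_eq_mul]
        exact Nat.mul_le_mul_right _ hS

end Collisions

section Flow

variable {n : ℕ} {G : BF n → BF n → ℝ} {w : BF n → BF n → BF n → ℝ}

lemma InfinityRelaxedFlow.sum_leak_agrees_eq_zero (hw : InfinityRelaxedFlow G w) {f : BF n}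
    (hf : 1 ≤ dimB f) (g : BF n) : ∑ g' ∈ univ.filter (agrees f g), leak w f g' = 0 := by
  simp only [leak, sum_sub_distrib, hw.2.2 g f hf, sub_self]

lemma InfinityRelaxedFlow.capacity_nonneg (hw : InfinityRelaxedFlow G w) (f₁ f₂ : BF n) :
    0 ≤ G f₁ f₂ := by
  linarith [hw.1 f₁ f₂ default, hw.1 f₂ f₁ default, hw.2.1 f₁ f₂ default]

lemma InfinityRelaxedFlow.abs_leak_le (hw : InfinityRelaxedFlow G w)
    (hG : ∀ f₁ f₂, G f₁ f₂ = G f₂ f₁) (f g : BF n) : |leak w f g| ≤ ∑ f₂, G f f₂ := by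
  rw [leak, inflow, outflow, ← sum_sub_distrib]
  refine (abs_sum_le_sum_abs _ _).trans (sum_le_sum fun f₂ _ => abs_le.2 ⟨?_, ?_⟩) <;>
    linarith [hw.1 f₂ f g, hw.1 f f₂ g, hw.2.1 f₂ f g, hG f f₂]

end Flow

section Decorrelation

variable {α β : Type*} [Fintype α] [DecidableEq α] [Fintype β] [DecidableEq β] {τ : α → β}

lemma sum_agree_off_image_eq (hτ : Function.Injective τ) (S : Set α) (c : α → Bool)
    (A : (α → Bool) → ℝ) (g₁ : β → Bool) :
    ∑ g' ∈ univ.filter (fun g' : β → Bool => ∀ b ∉ τ '' Sᶜ, g' b = g₁ b),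
        A (fun a => xor (g' (τ a)) (c a))
      = ∑ g ∈ univ.filter (fun g => ∀ a ∈ S, g a = xor (g₁ (τ a)) (c a)), A g := by
  have hS : ∀ a ∈ S, τ a ∉ τ '' Sᶜ := fun a ha ⟨a', ha', h⟩ => ha' (hτ h ▸ ha)
  refine sum_nbij' (fun g' a => xor (g' (τ a)) (c a))
    (fun g => Function.extend τ (fun a => xor (g a) (c a)) g₁) ?_ ?_ ?_ ?_ fun _ _ => rfl
  · intro g' hg'
    refine mem_filter.2 ⟨mem_univ _, fun a ha => ?_⟩
    exact congrArg (xor · (c a)) ((mem_filter.1 hg').2 _ (hS a ha))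
  · intro g hg
    refine mem_filter.2 ⟨mem_univ _, fun b hb => ?_⟩
    by_cases hrange : ∃ a, τ a = b
    · obtain ⟨a, rfl⟩ := hrange
      have ha : a ∈ S := by_contra fun ha => hb ⟨a, ha, rfl⟩
      rw [hτ.extend_apply, (mem_filter.1 hg).2 a ha]
      simp
    · rw [Function.extend_apply' _ _ _ hrange]
  · intro g' hg'
    funext b
    by_cases hrange : ∃ a, τ a = b
    · obtain ⟨a, rfl⟩ := hrange
      simp [hτ.extend_apply]
    · rw [Function.extend_apply' _ _ _ hrange,
        (mem_filter.1 hg').2 b fun ⟨a, _, h⟩ => hrange ⟨a, h⟩]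
  · intro g _
    funext a
    simp [hτ.extend_apply]

/-- Summing over the values of `g'` on `τ(Sᶜ)` runs `g' ∘ τ` (twisted by `c`) once over a class
of functions agreeing on `S`. -/
theorem sum_mul_eq_zero_of_sum_agree_eq_zero (hτ : Function.Injective τ) (S : Set α)
    (c : α → Bool) (A : (α → Bool) → ℝ) (B : (β → Bool) → ℝ)
    (hA : ∀ g₀ : α → Bool, ∑ g ∈ univ.filter (fun g => ∀ a ∈ S, g a = g₀ a), A g = 0)
    (hB : ∀ g₁ g₂ : β → Bool, (∀ b ∉ τ '' Sᶜ, g₁ b = g₂ b) → B g₁ = B g₂) :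
    ∑ g' : β → Bool, A (fun a => xor (g' (τ a)) (c a)) * B g' = 0 := by
  set restrict : (β → Bool) → β → Bool := fun g' b => if b ∈ τ '' Sᶜ then false else g' b
  have hfiber (g₁ g₂ : β → Bool) : restrict g₂ = restrict g₁ ↔ ∀ b ∉ τ '' Sᶜ, g₂ b = g₁ b := by
    simp only [restrict, funext_iff]
    exact forall_congr' fun b => by by_cases hb : b ∈ τ '' Sᶜ <;> simp [hb]
  rw [← sum_image' (g := restrict) (f := fun _ => (0 : ℝ)), sum_const_zero]
  intro g₁ _
  rw [filter_congr fun g₂ _ => hfiber g₁ g₂]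
  rw [sum_congr rfl fun g' hg' => by rw [hB g' g₁ (mem_filter.1 hg').2], ← sum_mul,
    sum_agree_off_image_eq hτ, hA, zero_mul]

end Decorrelation

section Moments

variable {k k' : ℕ} {G : BF k → BF k → ℝ} {w : BF k → BF k → BF k → ℝ}

lemma InfinityRelaxedFlow.sum_leak_sharpB_mul_eq_zero (hw : InfinityRelaxedFlow G w) {f : BF k}
    (hf : 1 ≤ dimB f) {p q : MParam k k'} (hpq : ¬Collide f p q) :
    ∑ g' : BF k', leak w f (sharpB p g') * leak w f (sharpB q g') = 0 := by
  have hB (g₁ g₂ : BF k') (h : ∀ y ∉ p.dualMap '' (affSupp f)ᶜ, g₁ y = g₂ y) :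
      leak w f (sharpB q g₁) = leak w f (sharpB q g₂) :=
    congrArg _ <| funext fun β => by
      rw [sharpB_apply, sharpB_apply, h _ fun ⟨α, hα, hαβ⟩ => hpq ⟨α, hα, β, hαβ⟩]
  exact sum_mul_eq_zero_of_sum_agree_eq_zero p.dualMap_injective (affSupp f)
    (fun α => decide (p.1.2.2.2 + p.1.2.1 ⬝ᵥ α = 1)) (leak w f) (fun g' => leak w f (sharpB q g'))
    -- the two filters differ only in their decidability instances
    (fun g₀ => by convert hw.sum_leak_agrees_eq_zero hf g₀; exact Iff.rfl) hB

lemma InfinityRelaxedFlow.sum_sq_liftLeak_le (hw : InfinityRelaxedFlow G w)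
    (hG : ∀ f₁ f₂, G f₁ f₂ = G f₂ f₁) {f : BF k} (hf : 1 ≤ dimB f) (f' : BF k') :
    ∑ g', liftLeak w f f' g' ^ 2 ≤ #{pq ∈ liftsTo f f' ×ˢ liftsTo f f' | Collide f pq.1 pq.2}
      * (Fintype.card (BF k') * (∑ f₂, G f f₂) ^ 2) := by
  have hprod : ∀ (g : BF k') (p q : MParam k k'),
      leak w f (sharpB p g) * leak w f (sharpB q g) ≤ (∑ f₂, G f f₂) ^ 2 :=
    fun g p q => (le_abs_self _).trans <| by
      rw [abs_mul, sq]
      exact mul_le_mul (hw.abs_leak_le hG _ _) (hw.abs_leak_le hG _ _) (abs_nonneg _)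
        (sum_nonneg fun f₂ _ => hw.capacity_nonneg f f₂)
  calc ∑ g', liftLeak w f f' g' ^ 2
      = ∑ pq ∈ liftsTo f f' ×ˢ liftsTo f f', ∑ g' : BF k',
          leak w f (sharpB pq.1 g') * leak w f (sharpB pq.2 g') := by
        simp only [liftLeak, sq, sum_mul_sum, sum_product' (f := fun p q =>
          ∑ g' : BF k', leak w f (sharpB p g') * leak w f (sharpB q g'))]
        rw [sum_comm]
        exact sum_congr rfl fun _ _ => sum_comm
    _ = ∑ pq ∈ liftsTo f f' ×ˢ liftsTo f f' with Collide f pq.1 pq.2, ∑ g' : BF k',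
          leak w f (sharpB pq.1 g') * leak w f (sharpB pq.2 g') := by
        rw [← sum_filter_add_sum_filter_not _ fun pq => Collide f pq.1 pq.2, add_eq_left]
        exact sum_eq_zero fun pq hpq => hw.sum_leak_sharpB_mul_eq_zero hf (mem_filter.1 hpq).2
    _ ≤ _ := by
        rw [← nsmul_eq_mul, ← sum_const]
        refine sum_le_sum fun pq _ => (sum_le_sum fun g _ => hprod g pq.1 pq.2).trans ?_
        rw [sum_const, card_univ, nsmul_eq_mul]

lemma InfinityRelaxedFlow.sum_abs_liftLeak_le (hw : InfinityRelaxedFlow G w)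
    (hG : ∀ f₁ f₂, G f₁ f₂ = G f₂ f₁) (f : BF k) {f' : BF k'} (hf' : 0 < dimB f')
    (hk : k < k') :
    ∑ g', |liftLeak w f f' g'| ≤ Fintype.card (BF k') *
      (2 ^ k * #(liftsTo f f') * ∑ f₂, G f f₂) / √(2 ^ k' - 2 ^ k) := by
  set N := liftsTo f f'
  set D : ℝ := 2 ^ k' - 2 ^ k with hDdef
  have hD : 0 < D := sub_pos.2 (pow_lt_pow_right₀ one_lt_two hk)
  have hcap : 0 ≤ ∑ f₂, G f f₂ := sum_nonneg fun f₂ _ => hw.capacity_nonneg f f₂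
  rcases N.eq_empty_or_nonempty with hN | ⟨p₀, hp₀⟩
  · simp [liftLeak, show liftsTo f f' = ∅ from hN, hN]
  have hf : 1 ≤ dimB f := hf'.trans_le (mem_liftsTo.1 hp₀ ▸ dimB_applyB_le p₀ f)
  have hcount : (#{pq ∈ N ×ˢ N | Collide f pq.1 pq.2} : ℝ) ≤ 2 ^ k * 2 ^ k * (#N * #N) / D := by
    rw [le_div_iff₀ hD, hDdef, ← Nat.cast_ofNat, ← Nat.cast_pow, ← Nat.cast_pow,
      ← Nat.cast_sub (Nat.pow_le_pow_right two_pos hk.le)]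
    exact_mod_cast card_collide_mul_le f f'
  have hsq : (∑ g', |liftLeak w f f' g'|) ^ 2
      ≤ (Fintype.card (BF k') * (2 ^ k * #N * ∑ f₂, G f f₂) / √D) ^ 2 :=
    calc (∑ g', |liftLeak w f f' g'|) ^ 2
        ≤ Fintype.card (BF k') * ∑ g', liftLeak w f f' g' ^ 2 := by
          simpa only [sq_abs, card_univ] using sq_sum_le_card_mul_sum_sq (s := univ)
            (f := fun g' => |liftLeak w f f' g'|)
      _ ≤ Fintype.card (BF k') * (#{pq ∈ N ×ˢ N | Collide f pq.1 pq.2}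
          * (Fintype.card (BF k') * (∑ f₂, G f f₂) ^ 2)) := by
          gcongr
          exact hw.sum_sq_liftLeak_le hG hf f'
      _ ≤ Fintype.card (BF k') * (2 ^ k * 2 ^ k * (#N * #N) / D
          * (Fintype.card (BF k') * (∑ f₂, G f f₂) ^ 2)) := by gcongr
      _ = _ := by
          rw [div_pow, Real.sq_sqrt hD.le]
          ring
  exact le_of_sq_le_sq hsq (by positivity)

end Moments

section Total

variable {k k' : ℕ}

lemma leakLift_eq (w : BF k → BF k → BF k → ℝ) (f' g' : BF k') :
    leakLift k k' w f' g' = (Fintype.card (MParam k k') : ℝ)⁻¹ * ∑ f, liftLeak w f f' g' := by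
  rw [leakLift, finsum_eq_sum_of_fintype, Nat.card_eq_fintype_card]
  simp only [liftLeak, liftsTo, sum_filter]
  rw [sum_comm]

lemma Ltot_le_sum_abs_liftLeak (w : BF k → BF k → BF k → ℝ) :
    Ltot k k' w ≤ (Fintype.card (BF k') : ℝ)⁻¹ * (Fintype.card (MParam k k') : ℝ)⁻¹
      * ∑ f, ∑ f' : BF k' with 0 < dimB f', ∑ g', |liftLeak w f f' g'| :=
  calc Ltot k k' w
      ≤ (Fintype.card (BF k') : ℝ)⁻¹ * ∑ g', ∑ f' with 0 < dimB f',
          (Fintype.card (MParam k k') : ℝ)⁻¹ * ∑ f, |liftLeak w f f' g'| := by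
        rw [Ltot]
        gcongr with g' _ f' _
        rw [leakLift_eq, abs_mul, abs_of_nonneg (by positivity)]
        gcongr
        exact abs_sum_le_sum_abs _ _
    _ = _ := by
        simp only [← mul_sum, mul_assoc]
        rw [sum_comm, sum_congr rfl fun f' _ => sum_comm, sum_comm]

variable {G : BF k → BF k → ℝ} {w : BF k → BF k → BF k → ℝ}

lemma InfinityRelaxedFlow.Ltot_le (hw : InfinityRelaxedFlow G w)
    (hG : ∀ f₁ f₂, G f₁ f₂ = G f₂ f₁) (hk : k < k') :
    Ltot k k' w ≤ 2 ^ k * (∑ f, ∑ f₂, G f f₂) / √(2 ^ k' - 2 ^ k) := by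
  set cB : ℝ := (Fintype.card (BF k') : ℝ)
  set cM : ℝ := (Fintype.card (MParam k k') : ℝ)
  set D : ℝ := 2 ^ k' - 2 ^ k
  have hcB : 0 < cB := Nat.cast_pos.2 Fintype.card_pos
  have hcap (f : BF k) : 0 ≤ ∑ f₂, G f f₂ := sum_nonneg fun f₂ _ => hw.capacity_nonneg f f₂
  have hcard (f : BF k) : ∑ f' : BF k', (#(liftsTo f f') : ℝ) = cM := by
    rw [← Nat.cast_sum, sum_card_liftsTo]
  have hcM : cM⁻¹ * cM ≤ 1 := by
    rcases eq_or_ne cM 0 with h | h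
    · simp [h]
    · rw [inv_mul_cancel₀ h]
  calc Ltot k k' w
      ≤ cB⁻¹ * cM⁻¹ * ∑ f, ∑ f' with 0 < dimB f', ∑ g', |liftLeak w f f' g'| :=
        Ltot_le_sum_abs_liftLeak w
    _ ≤ cB⁻¹ * cM⁻¹ * ∑ f, ∑ f', cB * (2 ^ k * #(liftsTo f f') * ∑ f₂, G f f₂) / √D := by
        gcongr with f _
        refine (sum_le_sum fun f' hf' =>
          hw.sum_abs_liftLeak_le hG f (mem_filter.1 hf').2 hk).trans ?_
        exact sum_le_sum_of_subset_of_nonneg (filter_subset _ _) fun f' _ _ => by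
          have := hcap f
          positivity
    _ = cB⁻¹ * cM⁻¹ * ∑ f, cB * 2 ^ k * (∑ f₂, G f f₂) / √D * cM := by
        congr 1
        refine sum_congr rfl fun f _ => ?_
        rw [← hcard f, mul_sum]
        exact sum_congr rfl fun f' _ => by ring
    _ = cM⁻¹ * cM * (2 ^ k * (∑ f, ∑ f₂, G f f₂) / √D) := by
        rw [← sum_mul, ← sum_div, ← mul_sum]
        field_simp
    _ ≤ 2 ^ k * (∑ f, ∑ f₂, G f f₂) / √D :=
        mul_le_of_le_one_left (by have := sum_nonneg fun f (_ : f ∈ univ) => hcap f; positivity) hcM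

end Total

lemma Ltot_nonneg (k k' : ℕ) (w : BF k → BF k → BF k → ℝ) : 0 ≤ Ltot k k' w :=
  mul_nonneg (inv_nonneg.2 (Nat.cast_nonneg _))
    (sum_nonneg fun _ _ => sum_nonneg fun _ _ => abs_nonneg _)

lemma tendsto_div_sqrt_two_pow_sub (a c : ℝ) :
    Filter.Tendsto (fun n : ℕ => a / √(2 ^ n - c)) Filter.atTop (nhds 0) := by
  refine Filter.Tendsto.const_div_atTop (Real.tendsto_sqrt_atTop.comp ?_) a
  simpa only [sub_eq_add_neg] using Filter.tendsto_atTop_add_const_right _ (-c)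
    (tendsto_pow_atTop_atTop_of_one_lt one_lt_two)

end

theorem total_leakage_bound_general {k : ℕ} (G : BF k → BF k → ℝ)
    (hGsymm : ∀ f₁ f₂, G f₁ f₂ = G f₂ f₁)
    (hGtot : (1 / 2 : ℝ) * ∑ f₁, ∑ f₂, G f₁ f₂ = 1)
    (w : BF k → BF k → BF k → ℝ) (hw : InfinityRelaxedFlow G w) :
    (∀ k' : ℕ, k < k' →
      Ltot k k' w ≤ (2 : ℝ) ^ (2 ^ k + k) / Real.sqrt ((2 ^ k' : ℝ) - 2 ^ k)) ∧
    Filter.Tendsto (fun k' => Ltot k k' w) Filter.atTop (nhds 0) := by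
  have hbound (k' : ℕ) (hk : k < k') :
      Ltot k k' w ≤ (2 : ℝ) ^ (2 ^ k + k) / Real.sqrt ((2 ^ k' : ℝ) - 2 ^ k) := by
    refine (hw.Ltot_le hGsymm hk).trans (div_le_div_of_nonneg_right ?_ (Real.sqrt_nonneg _))
    rw [show ∑ f, ∑ f₂, G f f₂ = 2 by linarith, pow_add, mul_comm]
    gcongr
    exact le_self_pow₀ one_le_two (by positivity)
  exact ⟨hbound, tendsto_of_tendsto_of_tendsto_of_le_of_le' tendsto_const_nhds
    (tendsto_div_sqrt_two_pow_sub _ _) (Filter.Eventually.of_forall fun k' => Ltot_nonneg k k' w)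
    (Filter.eventually_atTop.2 ⟨k + 1, hbound⟩)⟩

/-- The total lifted leakage of an infinity relaxed flow of a gadget with total capacity `1`
satisfies `L_{k'} ≤ 2^{2^k + k}/√(2^{k'} − 2^k)`; in particular `L_{k'} → 0` as
`k' → ∞`. -/
theorem total_leakage_bound {k : ℕ} (hk : 2 ≤ k) (G : BF k → BF k → ℝ)
    (hGsymm : ∀ f₁ f₂, G f₁ f₂ = G f₂ f₁) (hG0 : ∀ f₁ f₂, 0 ≤ G f₁ f₂)
    (hGneg : ∀ f, G f (fun x => !(f x)) = 0)
    (hGtot : (1 / 2 : ℝ) * ∑ f₁, ∑ f₂, G f₁ f₂ = 1)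
    (w : BF k → BF k → BF k → ℝ) (hw : InfinityRelaxedFlow G w) :
    (∀ k' : ℕ, k < k' →
      Ltot k k' w ≤ (2 : ℝ) ^ (2 ^ k + k) / Real.sqrt ((2 ^ k' : ℝ) - 2 ^ k)) ∧
    Filter.Tendsto (fun k' => Ltot k k' w) Filter.atTop (nhds 0) :=
  total_leakage_bound_general G hGsymm hGtot w hw
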